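/- Let α ≥ 1, let the agents have arbitrary nonnegative loss functions, and let τ = ⌈n/k⌉. Suppose C_1, C_2, …, C_m are pairwise disjoint nonempty subsets whose union is N, constructed greedily so that for each j, writing N_j = N \ (C_1 ∪ … ∪ C_{j−1}): if |N_j| ≥ τ then C_j is an α-approximate solution to the Most Cohesive Cluster problem on (N_j, τ), and if |N_j| < τ then C_j = N_j (so j = m). Then m ≤ k and the resulting k-clustering (C_1,…,C_m, with the remaining clusters empty) satisfies α-FJR. -/

import Mathlib

open scoped Classical

/-- The maximum of `f` over the finite set `S` (`0` if `S` is empty). -/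
noncomputable def maxOver {ι : Type*} (S : Finset ι) (f : ι → ℝ) : ℝ :=
  if h : S.Nonempty then S.sup' h f else 0

/-- The minimum of `f` over the finite set `S` (`0` if `S` is empty). -/
noncomputable def minOver {ι : Type*} (S : Finset ι) (f : ι → ℝ) : ℝ :=
  if h : S.Nonempty then S.inf' h f else 0

/-- The cluster containing agent `i` under the clustering (assignment) `C`. -/
def clusterOf {n k : ℕ} (C : Fin n → Fin k) (i : Fin n) : Finset (Fin n) :=
  Finset.univ.filter (fun j => C j = C i)

/-- The average loss of agent `i` in cluster `S`. -/
noncomputable def avgLoss {n : ℕ} (d : Fin n → Fin n → ℝ) (i : Fin n)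
    (S : Finset (Fin n)) : ℝ :=
  (∑ j ∈ S, d i j) / (S.card : ℝ)

/-- The maximum loss of agent `i` in cluster `S`. -/
noncomputable def maxLoss {n : ℕ} (d : Fin n → Fin n → ℝ) (i : Fin n)
    (S : Finset (Fin n)) : ℝ :=
  maxOver S (d i)

/-- `d` is a (pseudo)metric on the agents: zero on the diagonal, symmetric, and
satisfying the triangle inequality. -/
def IsPseudometric {n : ℕ} (d : Fin n → Fin n → ℝ) : Prop :=
  (∀ i, d i i = 0) ∧ (∀ i j, d i j = d j i) ∧ (∀ i j l, d i l ≤ d i j + d j l)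

/-- `C` is in the `α`-core: there is no group `S` of at least `n/k` agents such that
`α · ℓ i S < ℓ i (C(i))` for every `i ∈ S`. -/
def InCore {n k : ℕ} (α : ℝ) (ℓ : Fin n → Finset (Fin n) → ℝ) (C : Fin n → Fin k) : Prop :=
  ¬ ∃ S : Finset (Fin n), (n : ℝ) / k ≤ S.card ∧ ∀ i ∈ S, α * ℓ i S < ℓ i (clusterOf C i)

/-- `C` satisfies `α`-FJR: there is no group `S` of at least `n/k` agents such that
`α · max_{i ∈ S} ℓ i S < min_{j ∈ S} ℓ j (C(j))`. -/
def SatisfiesFJR {n k : ℕ} (α : ℝ) (ℓ : Fin n → Finset (Fin n) → ℝ)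
    (C : Fin n → Fin k) : Prop :=
  ¬ ∃ S : Finset (Fin n), (n : ℝ) / k ≤ S.card ∧
      α * maxOver S (fun i => ℓ i S) < minOver S (fun j => ℓ j (clusterOf C j))

/-- `S` is a `lam`-approximate solution to the Most Cohesive Cluster problem on `(N', τ)`:
`S ⊆ N'`, `|S| ≥ τ`, and `max_{i ∈ S} ℓ i S ≤ lam · max_{i ∈ S'} ℓ i S'` for every
`S' ⊆ N'` with `|S'| ≥ τ`. -/
def ApproxMCC {n : ℕ} (lam : ℝ) (ℓ : Fin n → Finset (Fin n) → ℝ)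
    (N' : Finset (Fin n)) (τ : ℕ) (S : Finset (Fin n)) : Prop :=
  S ⊆ N' ∧ τ ≤ S.card ∧
  ∀ S' ⊆ N', τ ≤ S'.card →
    maxOver S (fun i => ℓ i S) ≤ lam * maxOver S' (fun i => ℓ i S')

/-!
Since every proper step of the greedy procedure removes at least `⌈n/k⌉` agents and the last
removes at least one, `n > (m - 1)⌈n/k⌉`, while `n ≤ k⌈n/k⌉`; hence `m ≤ k`.
For FJR, take a group `S` with `|S| ≥ n/k` and let `C_j` be the first cluster meeting `S`.
Then `S` was still available at step `j`, so `C_j` is at most `α` times less cohesive than `S`,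
and an agent of `S ∩ C_j` has loss at most `α · max_{i ∈ S} ℓ_i(S)` in its own cluster.
-/

open Finset

lemma le_maxOver {ι : Type*} {S : Finset ι} {i : ι} (hi : i ∈ S) (f : ι → ℝ) :
    f i ≤ maxOver S f := by
  rw [maxOver, dif_pos ⟨i, hi⟩]
  exact le_sup' f hi

lemma minOver_le {ι : Type*} {S : Finset ι} {i : ι} (hi : i ∈ S) (f : ι → ℝ) :
    minOver S f ≤ f i := by
  rw [minOver, dif_pos ⟨i, hi⟩]
  exact inf'_le f hi

lemma le_mul_natCeil_div (n : ℕ) {k : ℕ} (hk : 1 ≤ k) : n ≤ k * ⌈(n : ℝ) / k⌉₊ := by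
  have hk' : (0 : ℝ) < k := by exact_mod_cast hk
  have : (n : ℝ) ≤ k * ⌈(n : ℝ) / k⌉₊ := by
    rw [← div_le_iff₀' hk']
    exact Nat.le_ceil _
  exact_mod_cast this

section Uncovered

variable {ι : Type*} [Fintype ι] [DecidableEq ι] {m : ℕ} (Cs : Fin m → Finset ι)

/-- The set `N_j` of the greedy procedure. -/
def uncovered (j : Fin m) : Finset ι :=
  univ \ (univ.filter (fun j' => j' < j)).biUnion Cs

variable {Cs}

lemma subset_uncovered {S : Finset ι} {j : Fin m} (h : ∀ j' < j, Disjoint (Cs j') S) :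
    S ⊆ uncovered Cs j := by
  intro x hx
  simp only [uncovered, mem_sdiff, mem_univ, true_and, mem_biUnion, mem_filter, not_exists,
    not_and]
  exact fun j' hj' hxj' => disjoint_left.mp (h j' hj') hxj' hx

lemma exists_first_meeting_subset_uncovered (hcover : univ.biUnion Cs = univ) {S : Finset ι}
    (hS : S.Nonempty) : ∃ j, (Cs j ∩ S).Nonempty ∧ S ⊆ uncovered Cs j := by
  obtain ⟨x, hx⟩ := hS
  have hmeet : ∃ j, (Cs j ∩ S).Nonempty := by
    obtain ⟨j, -, hxj⟩ := mem_biUnion.mp (hcover ▸ mem_univ x : x ∈ univ.biUnion Cs)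
    exact ⟨j, x, mem_inter.mpr ⟨hxj, hx⟩⟩
  obtain ⟨j, hj⟩ := exists_minimal_of_wellFoundedLT _ hmeet
  refine ⟨j, hj.prop, subset_uncovered fun j' hj' => ?_⟩
  rw [disjoint_iff_inter_eq_empty, ← not_nonempty_iff_eq_empty]
  exact hj.not_prop_of_lt hj'

lemma length_le_of_card_le_mul {k τ : ℕ} (hn : Fintype.card ι ≤ k * τ)
    (hne : ∀ j, (Cs j).Nonempty)
    (hdisj : ∀ j j' : Fin m, j ≠ j' → Disjoint (Cs j) (Cs j'))
    (hcover : univ.biUnion Cs = univ) (hbig : ∀ j : Fin m, j.val ≠ m - 1 → τ ≤ (Cs j).card) :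
    m ≤ k := by
  by_contra! hkm
  obtain ⟨m, rfl⟩ : ∃ m', m = m' + 1 := Nat.exists_eq_add_one.mpr (by omega)
  have hsum : ∑ j, (Cs j).card = Fintype.card ι := by
    rw [← card_biUnion fun j _ j' _ h => hdisj j j' h, hcover, card_univ]
  have hinit : m * τ ≤ ∑ j : Fin m, (Cs j.castSucc).card := by
    calc m * τ = ∑ _j : Fin m, τ := by simp
      _ ≤ _ := sum_le_sum fun j _ => hbig j.castSucc (by simp [j.isLt.ne])
  have hlast : 1 ≤ (Cs (Fin.last m)).card := card_pos.mpr (hne _)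
  rw [Fin.sum_univ_castSucc] at hsum
  have : k * τ ≤ m * τ := Nat.mul_le_mul_right _ (by omega)
  omega

end Uncovered

section Greedy

variable {n : ℕ}

def IsGreedyMCC {m : ℕ} (α : ℝ) (ℓ : Fin n → Finset (Fin n) → ℝ) (τ : ℕ)
    (Cs : Fin m → Finset (Fin n)) : Prop :=
  ∀ j : Fin m,
    (τ ≤ (uncovered Cs j).card → ApproxMCC α ℓ (uncovered Cs j) τ (Cs j)) ∧
    ((uncovered Cs j).card < τ → Cs j = uncovered Cs j ∧ j.val = m - 1)

variable {m : ℕ} {α : ℝ} {ℓ : Fin n → Finset (Fin n) → ℝ} {τ : ℕ} {Cs : Fin m → Finset (Fin n)}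

lemma IsGreedyMCC.le_card (hgreedy : IsGreedyMCC α ℓ τ Cs) {j : Fin m} (hj : j.val ≠ m - 1) :
    τ ≤ (Cs j).card := by
  by_cases h : τ ≤ (uncovered Cs j).card
  · exact ((hgreedy j).1 h).2.1
  · exact absurd ((hgreedy j).2 (not_le.mp h)).2 hj

lemma IsGreedyMCC.minOver_le_mul_maxOver (hgreedy : IsGreedyMCC α ℓ τ Cs)
    (hdisj : ∀ j j' : Fin m, j ≠ j' → Disjoint (Cs j) (Cs j'))
    (hcover : univ.biUnion Cs = univ) {g : Fin n → Fin m} (hg : ∀ i, i ∈ Cs (g i))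
    {S : Finset (Fin n)} (hS : τ ≤ S.card) :
    minOver S (fun i => ℓ i (Cs (g i))) ≤ α * maxOver S (fun i => ℓ i S) := by
  rcases S.eq_empty_or_nonempty with rfl | hSne
  · simp [maxOver, minOver]
  obtain ⟨j, ⟨x, hx⟩, hSj⟩ := exists_first_meeting_subset_uncovered hcover hSne
  obtain ⟨hxj, hxS⟩ := mem_inter.mp hx
  have hMCC := (hgreedy j).1 (hS.trans (card_le_card hSj))
  have hgx : g x = j := by
    by_contra h
    exact disjoint_left.mp (hdisj _ _ h) (hg x) hxj
  calc minOver S (fun i => ℓ i (Cs (g i)))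
      ≤ ℓ x (Cs j) := hgx ▸ minOver_le hxS _
    _ ≤ maxOver (Cs j) (fun i => ℓ i (Cs j)) := le_maxOver hxj (fun i => ℓ i (Cs j))
    _ ≤ α * maxOver S (fun i => ℓ i S) := hMCC.2.2 S hSj hS

end Greedy

theorem stmt6_general (n k : ℕ) (hk : 1 ≤ k) (α : ℝ)
    (ℓ : Fin n → Finset (Fin n) → ℝ)
    (m : ℕ) (Cs : Fin m → Finset (Fin n))
    (hne : ∀ j, (Cs j).Nonempty)
    (hdisj : ∀ j j' : Fin m, j ≠ j' → Disjoint (Cs j) (Cs j'))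
    (hcover : Finset.univ.biUnion Cs = (Finset.univ : Finset (Fin n)))
    (hgreedy : ∀ j : Fin m,
      (⌈(n : ℝ) / k⌉₊ ≤
          (Finset.univ \ (Finset.univ.filter (fun j' => j' < j)).biUnion Cs).card →
        ApproxMCC α ℓ (Finset.univ \ (Finset.univ.filter (fun j' => j' < j)).biUnion Cs)
          ⌈(n : ℝ) / k⌉₊ (Cs j)) ∧
      ((Finset.univ \ (Finset.univ.filter (fun j' => j' < j)).biUnion Cs).card <
          ⌈(n : ℝ) / k⌉₊ →
        Cs j = Finset.univ \ (Finset.univ.filter (fun j' => j' < j)).biUnion Cs ∧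
        j.val = m - 1)) :
    m ≤ k ∧
    ∀ g : Fin n → Fin m, (∀ i, i ∈ Cs (g i)) →
      ¬ ∃ S : Finset (Fin n), (n : ℝ) / k ≤ S.card ∧
          α * maxOver S (fun i => ℓ i S) < minOver S (fun i => ℓ i (Cs (g i))) := by
  have hgreedy : IsGreedyMCC α ℓ ⌈(n : ℝ) / k⌉₊ Cs := hgreedy
  refine ⟨length_le_of_card_le_mul ?_ hne hdisj hcover fun j => hgreedy.le_card, ?_⟩
  · simpa using le_mul_natCeil_div n hk
  · rintro g hg ⟨S, hS, hviolation⟩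
    exact (hgreedy.minOver_le_mul_maxOver hdisj hcover hg (Nat.ceil_le.mpr hS)).not_gt hviolation

/-- Greedy cohesive clustering with an `α`-approximate Most Cohesive Cluster subroutine:
if pairwise disjoint nonempty clusters `C_0, …, C_{m-1}` covering all agents are constructed
greedily — with `N_j` the agents not yet covered before step `j`, cluster `C_j` is an
`α`-approximate most cohesive cluster on `(N_j, ⌈n/k⌉)` whenever `|N_j| ≥ ⌈n/k⌉`, and
otherwise `C_j = N_j` and `j` is the last step — then `m ≤ k` and the resulting
`k`-clustering satisfies `α`-FJR. -/
theorem stmt6 (n k : ℕ) (hk : 1 ≤ k) (hkn : k ≤ n) (α : ℝ) (hα : 1 ≤ α)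
    (ℓ : Fin n → Finset (Fin n) → ℝ) (hℓ : ∀ i S, i ∈ S → 0 ≤ ℓ i S)
    (m : ℕ) (hm : 1 ≤ m) (Cs : Fin m → Finset (Fin n))
    (hne : ∀ j, (Cs j).Nonempty)
    (hdisj : ∀ j j' : Fin m, j ≠ j' → Disjoint (Cs j) (Cs j'))
    (hcover : Finset.univ.biUnion Cs = (Finset.univ : Finset (Fin n)))
    (hgreedy : ∀ j : Fin m,
      (⌈(n : ℝ) / k⌉₊ ≤
          (Finset.univ \ (Finset.univ.filter (fun j' => j' < j)).biUnion Cs).card →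
        ApproxMCC α ℓ (Finset.univ \ (Finset.univ.filter (fun j' => j' < j)).biUnion Cs)
          ⌈(n : ℝ) / k⌉₊ (Cs j)) ∧
      ((Finset.univ \ (Finset.univ.filter (fun j' => j' < j)).biUnion Cs).card <
          ⌈(n : ℝ) / k⌉₊ →
        Cs j = Finset.univ \ (Finset.univ.filter (fun j' => j' < j)).biUnion Cs ∧
        j.val = m - 1)) :
    m ≤ k ∧
    ∀ g : Fin n → Fin m, (∀ i, i ∈ Cs (g i)) →
      ¬ ∃ S : Finset (Fin n), (n : ℝ) / k ≤ S.card ∧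
          α * maxOver S (fun i => ℓ i S) < minOver S (fun i => ℓ i (Cs (g i))) :=
  stmt6_general n k hk α ℓ m Cs hne hdisj hcover hgreedy
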